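/- For every positive integer n, the map R sending each 132-avoiding permutation p of length n to its rank sequence R(p) = r(p_1) r(p_2) ... r(p_n) is a bijection from Av_n(132) onto S_n. -/
import Mathlib


/-- `s` is (the position set of) an increasing subsequence of the permutation `p`. -/
def IncSubseq {n : ℕ} (p : Equiv.Perm (Fin n)) (s : Finset (Fin n)) : Prop :=
  ∀ a ∈ s, ∀ b ∈ s, a < b → p a < p b

/-- `p` avoids the pattern 132. -/
def Avoids132 {n : ℕ} (p : Equiv.Perm (Fin n)) : Prop :=
  ¬ ∃ i j k : Fin n, i < j ∧ j < k ∧ p i < p k ∧ p k < p j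

/-- The subsequence with position set `s` begins at position `i`. -/
def BeginsAt {n : ℕ} (s : Finset (Fin n)) (i : Fin n) : Prop :=
  i ∈ s ∧ ∀ a ∈ s, i ≤ a

/-- The rank of the entry at position `i`: the maximal length of an increasing
subsequence of `p` beginning at position `i`. -/
noncomputable def rank {n : ℕ} (p : Equiv.Perm (Fin n)) (i : Fin n) : ℕ :=
  sSup {k : ℕ | ∃ s : Finset (Fin n), IncSubseq p s ∧ BeginsAt s i ∧ s.card = k}

/-- Membership in `S n`: positive entries, consecutive decreases by at most 1,
and the last entry equals 1. -/
def InSn (n : ℕ) (t : Fin n → ℕ) : Prop :=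
  (∀ i, 1 ≤ t i) ∧
  (∀ i : ℕ, (h : i + 1 < n) → t ⟨i, Nat.lt_of_succ_lt h⟩ ≤ t ⟨i + 1, h⟩ + 1) ∧
  (∀ h : 0 < n, t ⟨n - 1, Nat.sub_lt h Nat.one_pos⟩ = 1)

/-- `p` has a unique longest increasing subsequence. -/
def HasULIS {n : ℕ} (p : Equiv.Perm (Fin n)) : Prop :=
  ∃! s : Finset (Fin n), IncSubseq p s ∧
    ∀ t : Finset (Fin n), IncSubseq p t → t.card ≤ s.card

namespace RankSeqAux

open Finset

attribute [local instance] Classical.propDecidable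

variable {n : ℕ}

/-- For positions `i < j`: "the value at `j` is smaller than all values on `[i, j)`"
in terms of the rank sequence `t`. -/
def C (t : Fin n → ℕ) (i j : Fin n) : Prop := ∀ m, i ≤ m → m < j → t j < t m

/-- Value-order relation on positions induced by the sequence `t`. -/
def Lv (t : Fin n → ℕ) (i j : Fin n) : Prop :=
  (i < j ∧ C t i j) ∨ (j < i ∧ ¬ C t j i)

lemma C_trans {t : Fin n → ℕ} {a b c : Fin n} (hab : a < b) (hbc : b < c)
    (h1 : C t a b) (h2 : C t b c) : C t a c := by
  intro m ham hmc
  rcases lt_or_ge m b with h | h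
  · exact lt_trans (h2 b le_rfl hbc) (h1 m ham h)
  · exact h2 m h hmc

lemma C_mono {t : Fin n → ℕ} {a b c : Fin n} (hab : a ≤ b) (h : C t a c) : C t b c :=
  fun m hbm hmc => h m (le_trans hab hbm) hmc

lemma lv_irrefl (t : Fin n → ℕ) (i : Fin n) : ¬ Lv t i i := by
  rintro (⟨h, -⟩ | ⟨h, -⟩) <;> exact lt_irrefl _ h

lemma lv_asymm {t : Fin n → ℕ} {i j : Fin n} (h : Lv t i j) : ¬ Lv t j i := by
  rcases h with ⟨h1, h2⟩ | ⟨h1, h2⟩ <;>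
    rintro (⟨g1, g2⟩ | ⟨g1, g2⟩)
  · exact lt_asymm h1 g1
  · exact g2 h2
  · exact h2 g2
  · exact lt_asymm h1 g1

lemma lv_total {t : Fin n → ℕ} {i j : Fin n} (h : i ≠ j) : Lv t i j ∨ Lv t j i := by
  rcases lt_or_gt_of_ne h with hlt | hlt
  · by_cases hc : C t i j
    · exact Or.inl (Or.inl ⟨hlt, hc⟩)
    · exact Or.inr (Or.inr ⟨hlt, hc⟩)
  · by_cases hc : C t j i
    · exact Or.inr (Or.inl ⟨hlt, hc⟩)
    · exact Or.inl (Or.inr ⟨hlt, hc⟩)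

lemma lv_trans {t : Fin n → ℕ} {a b c : Fin n} (h1 : Lv t a b) (h2 : Lv t b c) :
    Lv t a c := by
  rcases h1 with ⟨hab, hC1⟩ | ⟨hba, hn1⟩ <;> rcases h2 with ⟨hbc, hC2⟩ | ⟨hcb, hn2⟩
  · exact Or.inl ⟨lt_trans hab hbc, C_trans hab hbc hC1 hC2⟩
  · -- a < b, C a b ; c < b, ¬ C c b
    rcases lt_trichotomy a c with hac | hac | hac
    · exact absurd (C_mono (le_of_lt hac) hC1) hn2
    · exact absurd (hac ▸ hC1) hn2
    · exact Or.inr ⟨hac, fun hCca => hn2 (C_trans hac hab hCca hC1)⟩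
  · -- b < a, ¬ C b a ; b < c, C b c
    rcases lt_trichotomy a c with hac | hac | hac
    · exact Or.inl ⟨hac, C_mono (le_of_lt hba) hC2⟩
    · exact absurd (hac ▸ hC2) hn1
    · exact Or.inr ⟨hac, fun hCca => hn1 (C_trans hbc hac hC2 hCca)⟩
  · -- b < a, ¬ C b a ; c < b
    exact Or.inr ⟨lt_trans hcb hba, fun hCca => hn1 (C_mono (le_of_lt hcb) hCca)⟩

/-- The number of positions `Lv`-below `i`. -/
noncomputable def cnt (t : Fin n → ℕ) (i : Fin n) : ℕ :=
  (univ.filter (fun j => Lv t j i)).card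

lemma cnt_lt_cnt {t : Fin n → ℕ} {i j : Fin n} (h : Lv t i j) : cnt t i < cnt t j := by
  have hnot : i ∉ univ.filter (fun k => Lv t k i) := by
    simp only [mem_filter]
    rintro ⟨-, hk⟩
    exact lv_irrefl t i hk
  have hsub : insert i (univ.filter (fun k => Lv t k i)) ⊆ univ.filter (fun k => Lv t k j) := by
    intro k hk
    rcases mem_insert.mp hk with rfl | hk
    · exact mem_filter.mpr ⟨mem_univ _, h⟩
    · exact mem_filter.mpr ⟨mem_univ _, lv_trans (mem_filter.mp hk).2 h⟩
  calc cnt t i < cnt t i + 1 := Nat.lt_succ_self _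
    _ = (insert i (univ.filter (fun k => Lv t k i))).card := (card_insert_of_notMem hnot).symm
    _ ≤ cnt t j := card_le_card hsub

lemma cnt_lt_n (t : Fin n → ℕ) (i : Fin n) : cnt t i < n := by
  have hsub : univ.filter (fun k => Lv t k i) ⊆ univ.erase i := by
    intro k hk
    refine mem_erase.mpr ⟨?_, mem_univ _⟩
    rintro rfl
    exact lv_irrefl t k (mem_filter.mp hk).2
  have h1 : (univ.erase i).card = n - 1 := by
    rw [card_erase_of_mem (mem_univ i), card_univ, Fintype.card_fin]
  have h2 := card_le_card hsub
  have hn : 0 < n := i.pos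
  show (univ.filter (fun k => Lv t k i)).card < n
  omega

/-- The inverse map: the permutation constructed from a sequence `t`. -/
noncomputable def Phi (t : Fin n → ℕ) : Equiv.Perm (Fin n) :=
  Equiv.ofBijective (fun i => (⟨cnt t i, cnt_lt_n t i⟩ : Fin n))
    (Finite.injective_iff_bijective.mp (by
      intro i j hij
      by_contra hne
      rcases lv_total (t := t) hne with h | h
      · have := cnt_lt_cnt h
        rw [Fin.mk.injEq] at hij
        omega
      · have := cnt_lt_cnt h
        rw [Fin.mk.injEq] at hij
        omega))

lemma phi_apply (t : Fin n → ℕ) (i : Fin n) : Phi t i = ⟨cnt t i, cnt_lt_n t i⟩ := rfl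

lemma phi_lt_of_lv {t : Fin n → ℕ} {i j : Fin n} (h : Lv t i j) : Phi t i < Phi t j := by
  rw [phi_apply, phi_apply, Fin.mk_lt_mk]
  exact cnt_lt_cnt h

lemma lv_of_phi_lt {t : Fin n → ℕ} {i j : Fin n} (h : Phi t i < Phi t j) : Lv t i j := by
  have hne : i ≠ j := by rintro rfl; exact lt_irrefl _ h
  rcases lv_total (t := t) hne with hlv | hlv
  · exact hlv
  · exact absurd (phi_lt_of_lv hlv) (lt_asymm h)

lemma phi_avoids (t : Fin n → ℕ) : Avoids132 (Phi t) := by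
  rintro ⟨i, j, k, hij, hjk, h1, h2⟩
  have hik := lv_of_phi_lt h1
  have hkj := lv_of_phi_lt h2
  rcases hik with ⟨-, hC⟩ | ⟨hki, -⟩
  · rcases hkj with ⟨hkj', -⟩ | ⟨-, hn⟩
    · exact lt_asymm hjk hkj'
    · exact hn (fun m hjm hmk => hC m (le_trans (le_of_lt hij) hjm) hmk)
  · exact lt_asymm (lt_trans hij hjk) hki


section RankBasics

variable {p : Equiv.Perm (Fin n)} {s : Finset (Fin n)} {i : Fin n}

lemma rank_bdd (p : Equiv.Perm (Fin n)) (i : Fin n) :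
    BddAbove {k : ℕ | ∃ s : Finset (Fin n), IncSubseq p s ∧ BeginsAt s i ∧ s.card = k} := by
  refine ⟨n, ?_⟩
  rintro k ⟨s, -, -, rfl⟩
  calc s.card ≤ univ.card := card_le_univ s
    _ = n := by rw [card_univ, Fintype.card_fin]

lemma singleton_inc (p : Equiv.Perm (Fin n)) (i : Fin n) :
    IncSubseq p {i} ∧ BeginsAt {i} i := by
  constructor
  · intro a ha b hb hab
    rw [mem_singleton] at ha hb
    subst ha; subst hb
    exact absurd hab (lt_irrefl _)
  · exact ⟨mem_singleton_self i, fun a ha => le_of_eq ((mem_singleton.mp ha).symm)⟩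

lemma rank_ge (hs : IncSubseq p s) (hb : BeginsAt s i) : s.card ≤ rank p i :=
  le_csSup (rank_bdd p i) ⟨s, hs, hb, rfl⟩

lemma rank_mem (p : Equiv.Perm (Fin n)) (i : Fin n) :
    ∃ s : Finset (Fin n), IncSubseq p s ∧ BeginsAt s i ∧ s.card = rank p i :=
  Nat.sSup_mem ⟨1, Set.mem_setOf.mpr ⟨{i}, (singleton_inc p i).1, (singleton_inc p i).2,
    card_singleton i⟩⟩ (rank_bdd p i)

lemma one_le_rank (p : Equiv.Perm (Fin n)) (i : Fin n) : 1 ≤ rank p i := by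
  have := rank_ge (singleton_inc p i).1 (singleton_inc p i).2
  simpa using this

lemma inc_subset {s' : Finset (Fin n)} (h : s' ⊆ s) (hs : IncSubseq p s) :
    IncSubseq p s' := fun a ha b hb hab => hs a (h ha) b (h hb) hab

lemma prepend {j : Fin n} (hs : IncSubseq p s) (hb : BeginsAt s j) (hij : i < j)
    (hv : p i < p j) :
    IncSubseq p (insert i s) ∧ BeginsAt (insert i s) i ∧ (insert i s).card = s.card + 1 := by
  have hvall : ∀ b ∈ s, p i < p b := by
    intro b hbs
    rcases eq_or_lt_of_le (hb.2 b hbs) with h | h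
    · rwa [← h]
    · exact lt_trans hv (hs j hb.1 b hbs h)
  have hiall : ∀ b ∈ s, i < b := fun b hbs => lt_of_lt_of_le hij (hb.2 b hbs)
  have hnot : i ∉ s := fun h => lt_irrefl i (hiall i h)
  refine ⟨?_, ⟨mem_insert_self _ _, ?_⟩, card_insert_of_notMem hnot⟩
  · intro a ha b hbm hab
    rcases mem_insert.mp ha with rfl | ha
    · rcases mem_insert.mp hbm with rfl | hbm
      · exact absurd hab (lt_irrefl _)
      · exact hvall b hbm
    · rcases mem_insert.mp hbm with hbi | hbm
      · exact absurd (hbi ▸ hab) (asymm (hiall a ha))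
      · exact hs a ha b hbm hab
  · intro a ha
    rcases mem_insert.mp ha with rfl | ha
    · exact le_rfl
    · exact (hiall a ha).le

lemma second (hs : IncSubseq p s) (hb : BeginsAt s i) (hex : ∃ b ∈ s, b ≠ i) :
    ∃ j, i < j ∧ p i < p j ∧ IncSubseq p (s.erase i) ∧ BeginsAt (s.erase i) j ∧
      (s.erase i).card + 1 = s.card := by
  obtain ⟨b0, hb0s, hb0⟩ := hex
  have hne : (s.erase i).Nonempty := ⟨b0, mem_erase.mpr ⟨hb0, hb0s⟩⟩
  set j := (s.erase i).min' hne with hj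
  have hjmem := (s.erase i).min'_mem hne
  have hji : j ≠ i := (mem_erase.mp hjmem).1
  have hjs : j ∈ s := (mem_erase.mp hjmem).2
  have hij : i < j := lt_of_le_of_ne (hb.2 j hjs) (Ne.symm hji)
  exact ⟨j, hij, hs i hb.1 j hjs hij, inc_subset (erase_subset _ _) hs,
    ⟨hjmem, fun a ha => min'_le _ a ha⟩, card_erase_add_one hb.1⟩

lemma card_le_one_of_all_eq (hex : ∀ c ∈ s, c = i) : s.card ≤ 1 :=
  card_le_one.mpr fun x hx y hy => (hex x hx).trans (hex y hy).symm

end RankBasics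


section Avoiding

variable {p : Equiv.Perm (Fin n)}

lemma rank_last (p : Equiv.Perm (Fin n)) (hn : 0 < n) :
    rank p ⟨n - 1, Nat.sub_lt hn Nat.one_pos⟩ = 1 := by
  set l : Fin n := ⟨n - 1, Nat.sub_lt hn Nat.one_pos⟩ with hl
  refine le_antisymm ?_ (one_le_rank p l)
  obtain ⟨s, -, hb, hc⟩ := rank_mem p l
  rw [← hc]
  apply card_le_one_of_all_eq
  intro b hbs
  have h1 : l ≤ b := hb.2 b hbs
  have h2 : b ≤ l := by
    rw [hl, Fin.le_def]
    have := b.isLt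
    simp only []
    omega
  exact le_antisymm h2 h1

lemma rank_descent (hp : Avoids132 p) (i : ℕ) (h : i + 1 < n) :
    rank p ⟨i, Nat.lt_of_succ_lt h⟩ ≤ rank p ⟨i + 1, h⟩ + 1 := by
  set a : Fin n := ⟨i, Nat.lt_of_succ_lt h⟩ with ha
  set b : Fin n := ⟨i + 1, h⟩ with hbdef
  obtain ⟨s, hs, hbg, hc⟩ := rank_mem p a
  by_cases hex : ∃ c ∈ s, c ≠ a
  · obtain ⟨j, haj, hv, hs', hb', hc'⟩ := second hs hbg hex
    rcases eq_or_ne j b with rfl | hjb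
    · have := rank_ge hs' hb'
      omega
    · have hbj : b < j := by
        have h1 : a < j := haj
        rw [ha, Fin.lt_def] at h1
        have h2 : j.val ≠ i + 1 := fun hh => hjb (Fin.ext hh)
        rw [hbdef, Fin.lt_def]
        simp only [] at h1 ⊢
        omega
      rcases lt_trichotomy (p b) (p j) with hpbj | hpe | hpjb
      · obtain ⟨hins, hbins, hcins⟩ := prepend hs' hb' hbj hpbj
        have := rank_ge hins hbins
        omega
      · exact absurd (p.injective hpe) (fun e => hjb e.symm)
      · have hab : a < b := by rw [ha, hbdef, Fin.lt_def]; simp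
        exact absurd ⟨a, b, j, hab, hbj, hv, hpjb⟩ hp
  · push_neg at hex
    have h1 := card_le_one_of_all_eq hex
    have h2 := one_le_rank p b
    omega

lemma rank_lt_of_between (hp : Avoids132 p) {i j m : Fin n} (hij : i < j) (hv : p i < p j)
    (him : i ≤ m) (hmj : m < j) : rank p j < rank p m := by
  have hmv : p m < p j := by
    rcases eq_or_lt_of_le him with rfl | him'
    · exact hv
    · rcases lt_trichotomy (p m) (p j) with h | h | h
      · exact h
      · exact absurd (p.injective h) (ne_of_lt hmj)
      · exact absurd ⟨i, m, j, him', hmj, hv, h⟩ hp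
  obtain ⟨s, hs, hb, hc⟩ := rank_mem p j
  obtain ⟨hins, hbins, hcins⟩ := prepend hs hb hmj hmv
  have := rank_ge hins hbins
  omega

lemma exists_le_rank (hp : Avoids132 p) {i j : Fin n} (hij : i < j) (hv : p j < p i) :
    ∃ m, i ≤ m ∧ m < j ∧ rank p m ≤ rank p j := by
  set M := univ.filter (fun m => i ≤ m ∧ m < j ∧ p j < p m) with hM
  have hiM : i ∈ M := mem_filter.mpr ⟨mem_univ _, le_rfl, hij, hv⟩
  set m := M.max' ⟨i, hiM⟩ with hm
  have hmM := M.max'_mem ⟨i, hiM⟩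
  obtain ⟨-, him, hmj, hvm⟩ := mem_filter.mp hmM
  refine ⟨m, him, hmj, ?_⟩
  obtain ⟨s, hs, hb, hc⟩ := rank_mem p m
  by_cases hex : ∃ c ∈ s, c ≠ m
  · obtain ⟨j0, hmj0, hvj0, hs', hb', hc'⟩ := second hs hb hex
    have hjj0 : j < j0 := by
      rcases lt_trichotomy j0 j with hlt | heq | hlt
      · exfalso
        have hmem : j0 ∈ M :=
          mem_filter.mpr ⟨mem_univ _, le_trans him hmj0.le, hlt, lt_trans hvm hvj0⟩
        exact absurd (M.le_max' j0 hmem) (not_le.mpr hmj0)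
      · subst heq
        exact absurd (lt_trans hvm hvj0) (lt_irrefl _)
      · exact hlt
    obtain ⟨hins, hbins, hcins⟩ := prepend hs' hb' hjj0 (lt_trans hvm hvj0)
    have h2 := rank_ge hins hbins
    have h3 := one_le_rank p j
    omega
  · push_neg at hex
    have h1 := card_le_one_of_all_eq hex
    have h2 := one_le_rank p j
    omega

lemma lv_rank_iff (hp : Avoids132 p) {i j : Fin n} (hij : i ≠ j) :
    Lv (rank p) i j ↔ p i < p j := by
  constructor
  · rintro (⟨h, hC⟩ | ⟨h, hn'⟩)
    · by_contra hno
      have hlt : p j < p i := lt_of_le_of_ne (not_lt.mp hno) (fun e => hij (p.injective e).symm)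
      obtain ⟨m, him, hmj, hr⟩ := exists_le_rank hp h hlt
      exact absurd (hC m him hmj) (not_lt.mpr hr)
    · by_contra hno
      have hlt : p j < p i := lt_of_le_of_ne (not_lt.mp hno) (fun e => hij (p.injective e).symm)
      exact hn' (fun m hm1 hm2 => rank_lt_of_between hp h hlt hm1 hm2)
  · intro hv
    rcases lt_or_gt_of_ne hij with h | h
    · exact Or.inl ⟨h, fun m h1 h2 => rank_lt_of_between hp h hv h1 h2⟩
    · refine Or.inr ⟨h, ?_⟩
      obtain ⟨m, h1, h2, hr⟩ := exists_le_rank hp h hv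
      intro hC
      exact absurd (hC m h1 h2) (not_lt.mpr hr)

lemma phi_rank (hp : Avoids132 p) : Phi (fun i => rank p i) = p := by
  apply Equiv.ext
  intro i
  rw [phi_apply]
  apply Fin.ext
  show cnt (fun i => rank p i) i = (p i).val
  have hfe : (univ.filter fun j => Lv (fun i => rank p i) j i)
      = univ.filter fun j => p j < p i := by
    apply filter_congr
    intro j _
    rcases eq_or_ne j i with rfl | hji
    · exact iff_of_false (lv_irrefl _ _) (lt_irrefl _)
    · exact lv_rank_iff hp hji
  rw [cnt, hfe]
  have hinj := Finset.card_image_of_injective (univ.filter fun j => p j < p i) p.injective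
  have himg : (univ.filter fun j => p j < p i).image p = univ.filter fun v => v < p i := by
    ext v
    simp only [mem_image, mem_filter, mem_univ, true_and]
    constructor
    · rintro ⟨j, hj, rfl⟩; exact hj
    · intro hv; exact ⟨p.symm v, by simpa using hv, by simp⟩
  rw [himg] at hinj
  rw [← hinj, ← Fin.card_Iio (p i)]
  congr 1
  ext j
  simp

end Avoiding


section PhiRank

variable {t : Fin n → ℕ}

lemma card_le_t (ht1 : ∀ i, 1 ≤ t i) :
    ∀ (k : ℕ) (s : Finset (Fin n)) (i : Fin n),
      IncSubseq (Phi t) s → BeginsAt s i → s.card ≤ k → s.card ≤ t i := by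
  intro k
  induction k with
  | zero => intro s i _ _ h; omega
  | succ k ih =>
    intro s i hs hb hk
    by_cases hex : ∃ c ∈ s, c ≠ i
    · obtain ⟨j, hij, hv, hs', hb', hc'⟩ := second hs hb hex
      have h1 : (s.erase i).card ≤ t j := ih _ j hs' hb' (by omega)
      have hlv : Lv t i j := lv_of_phi_lt hv
      have h2 : t j < t i := by
        rcases hlv with ⟨-, hC⟩ | ⟨h, -⟩
        · exact hC i le_rfl hij
        · exact absurd hij (asymm h)
      omega
    · push_neg at hex
      exact le_trans (card_le_one_of_all_eq hex) (ht1 i)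

lemma exists_next (ht : InSn n t) {i : Fin n} (h2 : 2 ≤ t i) :
    ∃ j : Fin n, i < j ∧ t j + 1 = t i ∧ C t i j := by
  obtain ⟨ht1, htd, htl⟩ := ht
  have hn : 0 < n := i.pos
  set l : Fin n := ⟨n - 1, Nat.sub_lt hn Nat.one_pos⟩ with hldef
  have htl' : t l = 1 := htl hn
  have hil : i < l := by
    refine lt_of_le_of_ne ?_ ?_
    · rw [hldef, Fin.le_def]
      have := i.isLt
      simp only []
      omega
    · intro he
      rw [he, htl'] at h2
      omega
  set F := univ.filter (fun j => i < j ∧ t j < t i) with hF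
  have hlF : l ∈ F := mem_filter.mpr ⟨mem_univ _, hil, by omega⟩
  set j := F.min' ⟨l, hlF⟩ with hjdef
  have hjF := F.min'_mem ⟨l, hlF⟩
  obtain ⟨-, hij, hji⟩ := mem_filter.mp hjF
  have hmin : ∀ m, i < m → m < j → t i ≤ t m := by
    intro m h1 h2'
    by_contra hc
    have hmem : m ∈ F := mem_filter.mpr ⟨mem_univ _, h1, not_le.mp hc⟩
    exact absurd (F.min'_le m hmem) (not_le.mpr h2')
  have hjval : 0 < j.val := by
    have := hij
    rw [Fin.lt_def] at this
    omega
  have h0 : j.val - 1 + 1 < n := by have := j.isLt; omega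
  set j' : Fin n := ⟨j.val - 1, Nat.lt_of_succ_lt h0⟩ with hj'def
  have hd : t j' ≤ t j + 1 := by
    have hd0 := htd (j.val - 1) h0
    have e2 : (⟨j.val - 1 + 1, h0⟩ : Fin n) = j := Fin.ext (by simp; omega)
    rw [e2] at hd0
    exact hd0
  have hij' : t i ≤ t j' := by
    rcases eq_or_ne i j' with he | hne
    · rw [he]
    · apply hmin j'
      · refine lt_of_le_of_ne ?_ hne
        rw [Fin.le_def, hj'def]
        have : i.val < j.val := hij
        simp only []
        omega
      · rw [Fin.lt_def, hj'def]
        simp only []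
        omega
  have hji2 : t j < t i := hji
  have hd2 : t j' ≤ t j + 1 := hd
  have hij2 : t i ≤ t j' := hij'
  refine ⟨j, hij, by omega, ?_⟩
  intro m h1 h2'
  rcases eq_or_lt_of_le h1 with he | h1'
  · rw [← he]; omega
  · exact lt_of_lt_of_le hji2 (hmin m h1' h2')

lemma exists_chain (ht : InSn n t) :
    ∀ (k : ℕ) (i : Fin n), t i ≤ k →
      ∃ s : Finset (Fin n), IncSubseq (Phi t) s ∧ BeginsAt s i ∧ s.card = t i := by
  intro k
  induction k with
  | zero => intro i h; exact absurd (le_trans (ht.1 i) h) (by omega)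
  | succ k ih =>
    intro i h
    rcases le_or_gt (t i) 1 with h1 | h1
    · refine ⟨{i}, (singleton_inc (Phi t) i).1, (singleton_inc (Phi t) i).2, ?_⟩
      have := ht.1 i
      rw [card_singleton]
      omega
    · obtain ⟨j, hij, hjt, hC⟩ := exists_next ht (show 2 ≤ t i by omega)
      have hjk : t j ≤ k := by omega
      obtain ⟨s, hs, hb, hc⟩ := ih j hjk
      have hv : Phi t i < Phi t j := phi_lt_of_lv (Or.inl ⟨hij, hC⟩)
      obtain ⟨hins, hbins, hcins⟩ := prepend hs hb hij hv
      exact ⟨insert i s, hins, hbins, by omega⟩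

lemma rank_phi (ht : InSn n t) (i : Fin n) : rank (Phi t) i = t i := by
  apply le_antisymm
  · obtain ⟨s, hs, hb, hc⟩ := rank_mem (Phi t) i
    rw [← hc]
    exact card_le_t ht.1 s.card s i hs hb le_rfl
  · obtain ⟨s, hs, hb, hc⟩ := exists_chain ht (t i) i le_rfl
    rw [← hc]
    exact rank_ge hs hb

end PhiRank

end RankSeqAux

open RankSeqAux in
/-- The rank-sequence map `R` is a bijection from the set of
132-avoiding permutations of length `n` onto `S_n`. -/
theorem rank_seq_bijOn (n : ℕ) (hn : 0 < n) :
    Set.BijOn (fun p : Equiv.Perm (Fin n) => fun i : Fin n => rank p i)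
      {p : Equiv.Perm (Fin n) | Avoids132 p}
      {t : Fin n → ℕ | InSn n t} := by
  have hmaps1 : Set.MapsTo (fun p : Equiv.Perm (Fin n) => fun i : Fin n => rank p i)
      {p : Equiv.Perm (Fin n) | Avoids132 p} {t : Fin n → ℕ | InSn n t} := by
    intro p hp
    exact ⟨fun i => one_le_rank p i, fun i h => rank_descent hp i h, fun h => rank_last p h⟩
  have hmaps2 : Set.MapsTo (fun t : Fin n → ℕ => Phi t)
      {t : Fin n → ℕ | InSn n t} {p : Equiv.Perm (Fin n) | Avoids132 p} :=
    fun t _ => phi_avoids t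
  refine Set.InvOn.bijOn ⟨?_, ?_⟩ hmaps1 hmaps2
  · intro p hp
    exact phi_rank hp
  · intro t ht
    funext i
    exact rank_phi ht i
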